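/- Let u : ℝ × ℝ^D → ℝ^D be continuously differentiable, and let p : ℝ × ℝ^D → (0,∞) be continuously differentiable and satisfy the continuity equation with respect to u. Let ũ : ℝ × ℝ^D → ℝ^D be continuous and let x : ℝ → ℝ^D be a differentiable curve with x′(t) = ũ(t, x(t)). Then for all t, (d/dt) log p(t, x(t)) = −div_x u(t, x(t)) + ⟨∇_x log p(t, x(t)), ũ(t, x(t)) − u(t, x(t))⟩. -/

import Mathlib

open scoped RealInnerProductSpace

/-- Divergence of a vector field on `ℝ^D`. -/
noncomputable def vdiv {D : ℕ} (f : EuclideanSpace ℝ (Fin D) → EuclideanSpace ℝ (Fin D))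
    (x : EuclideanSpace ℝ (Fin D)) : ℝ :=
  ∑ i, fderiv ℝ f x (EuclideanSpace.single i 1) i

lemma clm_apply_eq_sum {D : ℕ} (m : EuclideanSpace ℝ (Fin D) →L[ℝ] ℝ)
    (v : EuclideanSpace ℝ (Fin D)) :
    m v = ∑ i, v i * m (EuclideanSpace.single i 1) := by
  have h : ∑ i, v i • EuclideanSpace.single i (1:ℝ) = v := by
    have := (EuclideanSpace.basisFun (Fin D) ℝ).sum_repr v
    simpa [EuclideanSpace.basisFun_apply, EuclideanSpace.basisFun_repr] using this
  conv_lhs => rw [← h]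
  rw [map_sum]
  simp [smul_eq_mul]

/-- Generalized instantaneous change of log-density: if `p` solves the continuity equation for
`u` and the trajectory `x` instead follows `ũ`, then
`(d/dt) log p(t, x(t)) = −div u(t, x(t)) + ⟨∇ log p(t, x(t)), ũ(t,x(t)) − u(t,x(t))⟩`. -/
theorem generalized_instantaneous_change_of_log_density {D : ℕ}
    (u : ℝ → EuclideanSpace ℝ (Fin D) → EuclideanSpace ℝ (Fin D))
    (hu : ContDiff ℝ 1 (Function.uncurry u))
    (p : ℝ → EuclideanSpace ℝ (Fin D) → ℝ)
    (hp_pos : ∀ t x, 0 < p t x)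
    (hp_smooth : ContDiff ℝ 1 (Function.uncurry p))
    (hcont : ∀ t x, deriv (fun s => p s x) t + vdiv (fun y => p t y • u t y) x = 0)
    (ut : ℝ → EuclideanSpace ℝ (Fin D) → EuclideanSpace ℝ (Fin D))
    (hut : Continuous (Function.uncurry ut))
    (x : ℝ → EuclideanSpace ℝ (Fin D))
    (hx : ∀ t, HasDerivAt x (ut t (x t)) t) :
    ∀ t, HasDerivAt (fun s => Real.log (p s (x s)))
      (-vdiv (u t) (x t) +
        ⟪gradient (fun y => Real.log (p t y)) (x t), ut t (x t) - u t (x t)⟫) t := by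
  intro t
  classical
  have hfP : HasFDerivAt (Function.uncurry p) (fderiv ℝ (Function.uncurry p) (t, x t)) (t, x t) :=
    (hp_smooth.differentiable one_ne_zero (t, x t)).hasFDerivAt
  have hfU : HasFDerivAt (Function.uncurry u) (fderiv ℝ (Function.uncurry u) (t, x t)) (t, x t) :=
    (hu.differentiable one_ne_zero (t, x t)).hasFDerivAt
  set Dp := fderiv ℝ (Function.uncurry p) (t, x t) with hDpdef
  set Du := fderiv ℝ (Function.uncurry u) (t, x t) with hDudef
  set P := p t (x t) with hPdef
  have hPpos : 0 < P := hp_pos t (x t)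
  have hinr : HasFDerivAt (fun y : EuclideanSpace ℝ (Fin D) => ((t, y) : ℝ × EuclideanSpace ℝ (Fin D)))
      (ContinuousLinearMap.inr ℝ ℝ (EuclideanSpace ℝ (Fin D))) (x t) :=
    hasFDerivAt_prodMk_right t (x t)
  have hinl : HasFDerivAt (fun s : ℝ => ((s, x t) : ℝ × EuclideanSpace ℝ (Fin D)))
      (ContinuousLinearMap.inl ℝ ℝ (EuclideanSpace ℝ (Fin D))) t :=
    hasFDerivAt_prodMk_left t (x t)
  have hpx : HasFDerivAt (fun y => p t y)
      (Dp.comp (ContinuousLinearMap.inr ℝ ℝ (EuclideanSpace ℝ (Fin D)))) (x t) :=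
    hfP.comp (x t) hinr
  have hux : HasFDerivAt (u t)
      (Du.comp (ContinuousLinearMap.inr ℝ ℝ (EuclideanSpace ℝ (Fin D)))) (x t) :=
    hfU.comp (x t) hinr
  have hpt : HasDerivAt (fun s => p s (x t)) (Dp (1, 0)) t := by
    have h1 : HasFDerivAt (fun s => p s (x t))
        (Dp.comp (ContinuousLinearMap.inl ℝ ℝ (EuclideanSpace ℝ (Fin D)))) t :=
      by have h := hfP.comp t hinl; exact h
    simpa using h1.hasDerivAt
  have hsm : HasFDerivAt (fun y => p t y • u t y)
      (P • (Du.comp (ContinuousLinearMap.inr ℝ ℝ (EuclideanSpace ℝ (Fin D)))) +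
        (Dp.comp (ContinuousLinearMap.inr ℝ ℝ (EuclideanSpace ℝ (Fin D)))).smulRight (u t (x t)))
      (x t) := hpx.smul hux
  have hvdiv_smul : vdiv (fun y => p t y • u t y) (x t)
      = P * vdiv (u t) (x t) + Dp (0, u t (x t)) := by
    unfold vdiv
    rw [hsm.fderiv, hux.fderiv]
    have hrepr : Dp ((0 : ℝ), u t (x t))
        = ∑ i, (u t (x t)) i * Dp ((0 : ℝ), EuclideanSpace.single i 1) := by
      simpa using clm_apply_eq_sum
        (Dp.comp (ContinuousLinearMap.inr ℝ ℝ (EuclideanSpace ℝ (Fin D)))) (u t (x t))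
    rw [hrepr]
    simp only [ContinuousLinearMap.add_apply, ContinuousLinearMap.coe_smul', Pi.smul_apply,
      ContinuousLinearMap.smulRight_apply, ContinuousLinearMap.comp_apply,
      ContinuousLinearMap.inr_apply, PiLp.add_apply, PiLp.smul_apply, smul_eq_mul]
    rw [Finset.mul_sum, ← Finset.sum_add_distrib]
    exact Finset.sum_congr rfl fun i _ => by ring
  have htraj : HasDerivAt (fun s => p s (x s)) (Dp (1, ut t (x t))) t := by
    have hcurve : HasDerivAt (fun s => ((s, x s) : ℝ × EuclideanSpace ℝ (Fin D)))
        ((1 : ℝ), ut t (x t)) t := HasDerivAt.prodMk (hasDerivAt_id t) (hx t)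
    exact hfP.comp_hasDerivAt t hcurve
  have hlog : HasDerivAt (fun s => Real.log (p s (x s))) (Dp (1, ut t (x t)) / P) t :=
    htraj.log hPpos.ne'
  have hlogx : HasFDerivAt (fun y => Real.log (p t y))
      (P⁻¹ • (Dp.comp (ContinuousLinearMap.inr ℝ ℝ (EuclideanSpace ℝ (Fin D))))) (x t) :=
    hpx.log hPpos.ne'
  have hgrad : ∀ w, ⟪gradient (fun y => Real.log (p t y)) (x t), w⟫ = P⁻¹ * Dp (0, w) := by
    intro w
    unfold gradient
    rw [hlogx.fderiv, InnerProductSpace.toDual_symm_apply]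
    simp
  have hc : Dp (1, 0) + (P * vdiv (u t) (x t) + Dp (0, u t (x t))) = 0 := by
    have h := hcont t (x t)
    rwa [hpt.deriv, hvdiv_smul] at h
  have key : Dp (1, ut t (x t)) / P
      = -vdiv (u t) (x t) +
        ⟪gradient (fun y => Real.log (p t y)) (x t), ut t (x t) - u t (x t)⟫ := by
    rw [hgrad]
    have e1 : ((1:ℝ), ut t (x t)) = ((1:ℝ), (0 : EuclideanSpace ℝ (Fin D))) + (0, ut t (x t)) := by
      simp [Prod.ext_iff]
    have hsplit : Dp (1, ut t (x t)) = Dp (1, 0) + Dp (0, ut t (x t)) := by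
      rw [e1, map_add]
    have hmap : Dp ((0 : ℝ × EuclideanSpace ℝ (Fin D)).1, ut t (x t) - u t (x t))
        = Dp (0, ut t (x t)) - Dp (0, u t (x t)) := by
      rw [show ((0 : ℝ × EuclideanSpace ℝ (Fin D)).1, ut t (x t) - u t (x t))
          = ((0:ℝ), ut t (x t)) - ((0:ℝ), u t (x t)) by simp [Prod.ext_iff], map_sub]
    have h10 : Dp (1, 0) = -(P * vdiv (u t) (x t) + Dp (0, u t (x t))) := by linarith
    rw [hsplit, h10]
    have : Dp (0, ut t (x t) - u t (x t)) = Dp (0, ut t (x t)) - Dp (0, u t (x t)) := by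
      simpa using hmap
    rw [this]
    field_simp
    ring
  exact key ▸ hlog
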